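/- arXiv:1401.5354 — 2 statements merged into one kernel-verified Lean document; each statement's English description precedes it below -/
import Mathlib

section
/- A set X of houses in a house allocation instance is avoidable (i.e., there exists a Pareto optimal matching whose image is disjoint from X) if and only if for every set R of applicants, the set of houses y ∉ X such that some applicant in R strictly prefers y to all elements of X appearing in that applicant's preference has size at least |R|. Equivalently: for every set R of applicants, |{ y ∈ B \ X : ∃ r ∈ R, r strictly prefers y to every element of X }| ≥ |R|. -/
/-!
A Pareto optimal matching `τ` avoiding `X` must give every applicant a house preferred to all
of `X`: otherwise that applicant alone blocks by moving to the unoccupied house of `X` it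
prefers. So `τ` maps `R` injectively into the set on the right, which gives the counting
condition.

Conversely, the counting condition is Hall's condition for the relation "`a` prefers `y` to
all of `X`", so some matching respects that relation. The relation is upward closed in each
preference order, so it survives Pareto improvements; a matching respecting it that maximises
the total number of houses each applicant ranks below their own is then Pareto optimal, and it
avoids `X` by irreflexivity.
-/

/-- `S` is a blocking coalition of the matching `τ`. -/
def IsBlocking {A B : Type*} (pref : A → B → B → Prop) (τ : A → B) (S : Set A) : Prop :=
  S.Nonempty ∧ ∃ τ' : A → B, Function.Injective τ' ∧
    (∀ a ∉ S, τ' a = τ a) ∧ ∀ a ∈ S, pref a (τ' a) (τ a)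

/-- `τ` is a Pareto optimal matching. -/
def IsPOM {A B : Type*} (pref : A → B → B → Prop) (τ : A → B) : Prop :=
  Function.Injective τ ∧ ∀ S : Set A, ¬ IsBlocking pref τ S

open Function

section HouseAllocation

variable {A B : Type*} {pref : A → B → B → Prop}

theorem isBlocking_singleton_of_notMem_range {τ : A → B} (hτ : Injective τ) {a : A} {z : B}
    (hz : z ∉ Set.range τ) (h : pref a z (τ a)) : IsBlocking pref τ {a} := by
  classical
  refine ⟨Set.singleton_nonempty a, Equiv.swap (τ a) z ∘ τ,
    (Equiv.swap _ _).injective.comp hτ, fun b hb => ?_, ?_⟩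
  · exact Equiv.swap_apply_of_ne_of_ne (hτ.ne hb) fun hbz => hz ⟨b, hbz⟩
  · rintro b rfl
    simpa only [comp_apply, Equiv.swap_apply_left] using h

theorem IsPOM.pref_of_notMem_range [∀ a, Std.Trichotomous (pref a)] {τ : A → B}
    (hτ : IsPOM pref τ) {z : B} (hz : z ∉ Set.range τ) (a : A) : pref a (τ a) z := by
  rcases trichotomous_of (pref a) (τ a) z with h | rfl | h
  · exact h
  · exact absurd ⟨a, rfl⟩ hz
  · exact absurd (isBlocking_singleton_of_notMem_range hτ.1 hz h) (hτ.2 _)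

theorem ncard_setOf_pref_lt [Finite B] [∀ a, IsStrictOrder B (pref a)] {a : A} {y y' : B}
    (h : pref a y' y) : {z | pref a y z}.ncard < {z | pref a y' z}.ncard :=
  Set.ncard_lt_ncard ⟨fun _ hz => _root_.trans h hz,
    fun hsub => irrefl_of (pref a) y (hsub h)⟩

section Potential

variable [Fintype A]

noncomputable def rankPotential (pref : A → B → B → Prop) (τ : A → B) : ℕ :=
  ∑ a, {z | pref a (τ a) z}.ncard

variable [Finite B] [∀ a, IsStrictOrder B (pref a)]

theorem rankPotential_lt_of_isBlocking {τ τ' : A → B} {S : Set A} (hS : S.Nonempty)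
    (hout : ∀ a ∉ S, τ' a = τ a) (hin : ∀ a ∈ S, pref a (τ' a) (τ a)) :
    rankPotential pref τ < rankPotential pref τ' := by
  obtain ⟨a₀, ha₀⟩ := hS
  refine Finset.sum_lt_sum (fun a _ => ?_)
    ⟨a₀, Finset.mem_univ _, ncard_setOf_pref_lt (hin a₀ ha₀)⟩
  by_cases ha : a ∈ S
  · exact (ncard_setOf_pref_lt (hin a ha)).le
  · rw [hout a ha]

theorem exists_isPOM_of_upwardClosed (P : A → B → Prop)
    (hP : ∀ a y y', P a y → pref a y' y → P a y') {τ₀ : A → B} (hτ₀ : Injective τ₀)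
    (hτ₀P : ∀ a, P a (τ₀ a)) : ∃ τ, IsPOM pref τ ∧ ∀ a, P a (τ a) := by
  obtain ⟨τ, ⟨hτ, hτP⟩, hmax⟩ := Set.Finite.exists_maximalFor (rankPotential pref)
    {τ : A → B | Injective τ ∧ ∀ a, P a (τ a)} (Set.toFinite _) ⟨τ₀, hτ₀, hτ₀P⟩
  refine ⟨τ, ⟨hτ, ?_⟩, hτP⟩
  rintro S ⟨hS, τ', hτ', hout, hin⟩
  have hτ'P : ∀ a, P a (τ' a) := fun a => by
    by_cases ha : a ∈ S
    · exact hP a _ _ (hτP a) (hin a ha)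
    · exact hout a ha ▸ hτP a
  have hlt := rankPotential_lt_of_isBlocking hS hout hin
  exact hlt.not_ge (hmax ⟨hτ', hτ'P⟩ hlt.le)

end Potential

theorem card_le_ncard_of_isPOM [Finite B] [∀ a, Std.Trichotomous (pref a)] {X : Set B}
    {τ : A → B} (hτ : IsPOM pref τ) (hX : ∀ a, τ a ∉ X) (R : Finset A) :
    R.card ≤ {y : B | y ∉ X ∧ ∃ r ∈ R, ∀ z ∈ X, pref r y z}.ncard := by
  have hbeat : ∀ a, ∀ z ∈ X, pref a (τ a) z := fun a z hz =>
    hτ.pref_of_notMem_range (fun ⟨b, hb⟩ => hX b (hb ▸ hz)) a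
  calc R.card = (τ '' R).ncard := by
        rw [Set.ncard_image_of_injective _ hτ.1, Set.ncard_coe_finset]
    _ ≤ _ := Set.ncard_le_ncard (by
        rintro _ ⟨r, hr, rfl⟩
        exact ⟨hX r, r, hr, hbeat r⟩)

theorem exists_isPOM_avoiding_of_card_le [Fintype A] [Fintype B]
    [∀ a, IsStrictOrder B (pref a)] {X : Set B} (hHall : ∀ R : Finset A,
      R.card ≤ {y : B | y ∉ X ∧ ∃ r ∈ R, ∀ z ∈ X, pref r y z}.ncard) :
    ∃ τ : A → B, IsPOM pref τ ∧ ∀ a, τ a ∉ X := by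
  classical
  have notMem_of_pref_all : ∀ a y, (∀ z ∈ X, pref a y z) → y ∉ X :=
    fun a y hy hyX => irrefl_of (pref a) y (hy y hyX)
  obtain ⟨τ₀, hτ₀, hτ₀X⟩ :=
    (Fintype.all_card_le_filter_rel_iff_exists_injective fun a y => ∀ z ∈ X, pref a y z).mp
      fun R => by
        convert hHall R using 1
        rw [Set.ncard_eq_toFinset_card', Set.toFinset_ofPred]
        congr 1
        ext y
        simp only [Finset.mem_filter, Finset.mem_univ, true_and, iff_and_self]
        rintro ⟨r, -, hr⟩
        exact notMem_of_pref_all r y hr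
  obtain ⟨τ, hτ, hτX⟩ := exists_isPOM_of_upwardClosed (pref := pref)
    (fun a y => ∀ z ∈ X, pref a y z) (fun a _ _ hy h z hz => _root_.trans h (hy z hz)) hτ₀ hτ₀X
  exact ⟨τ, hτ, fun a => notMem_of_pref_all a _ (hτX a)⟩

end HouseAllocation

theorem stmt9_general {A B : Type*} [Fintype A] [Fintype B]
    (pref : A → B → B → Prop) (hpref : ∀ a, IsStrictTotalOrder B (pref a))
    (X : Set B) :
    (∃ τ : A → B, IsPOM pref τ ∧ ∀ a, τ a ∉ X) ↔
      ∀ R : Finset A,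
        R.card ≤ {y : B | y ∉ X ∧ ∃ r ∈ R, ∀ z ∈ X, pref r y z}.ncard := by
  have := hpref
  exact ⟨fun ⟨τ, hτ, hX⟩ => card_le_ncard_of_isPOM hτ hX, exists_isPOM_avoiding_of_card_le⟩

/-- a set `X` of houses is avoidable iff for every set `R` of
applicants, the set of houses outside `X` that some applicant of `R` strictly
prefers to every element of `X` has size at least `|R|`. -/
theorem stmt9 {A B : Type*} [Fintype A] [Fintype B]
    (hAB : Fintype.card A ≤ Fintype.card B)
    (pref : A → B → B → Prop) (hpref : ∀ a, IsStrictTotalOrder B (pref a))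
    (X : Set B) :
    (∃ τ : A → B, IsPOM pref τ ∧ ∀ a, τ a ∉ X) ↔
      ∀ R : Finset A,
        R.card ≤ {y : B | y ∉ X ∧ ∃ r ∈ R, ∀ z ∈ X, pref r y z}.ncard :=
  stmt9_general pref hpref X
end

section
/- Consider a 2-column house allocation instance whose bipartite row-element graph is connected; if it is a tree (so the number of distinct listed houses is |A| + 1), then for every avoidable house x there exists a Pareto optimal matching whose image equals the set of all listed houses except x, and no matching can have all listed houses in its image. -/
/-- A 2-column house allocation instance: every applicant has a top house and
a (distinct) second house; only these two houses of its preference list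
matter. -/
structure TwoCol (A B : Type*) where
  h1 : A → B
  h2 : A → B
  distinct : ∀ a, h1 a ≠ h2 a

namespace TwoCol

variable {A B : Type*}

/-- A (partial) matching of a 2-column instance: each applicant receives
either its top house, its second house, or nothing, and no house is given to
two applicants. -/
def IsMatching (M : TwoCol A B) (τ : A → Option B) : Prop :=
  (∀ a b, τ a = some b → b = M.h1 a ∨ b = M.h2 a) ∧
    ∀ a a' b, τ a = some b → τ a' = some b → a = a'

/-- Applicant `a` strictly prefers outcome `x` to outcome `y`
(top house ≻ second house ≻ unassigned). -/
def PrefOpt (M : TwoCol A B) (a : A) (x y : Option B) : Prop :=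
  (x = some (M.h1 a) ∧ y ≠ some (M.h1 a)) ∨ (x = some (M.h2 a) ∧ y = none)

/-- `S` is a blocking coalition of `τ`. -/
def IsBlocking (M : TwoCol A B) (τ : A → Option B) (S : Set A) : Prop :=
  S.Nonempty ∧ ∃ τ' : A → Option B, M.IsMatching τ' ∧
    (∀ a ∉ S, τ' a = τ a) ∧ ∀ a ∈ S, M.PrefOpt a (τ' a) (τ a)

/-- `τ` is a Pareto optimal matching of the 2-column instance `M`. -/
def IsPOM (M : TwoCol A B) (τ : A → Option B) : Prop :=
  M.IsMatching τ ∧ ∀ S : Set A, ¬ M.IsBlocking τ S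

/-- The bipartite row-element graph of a 2-column instance: applicant `a` is
adjacent to house `b` iff `b` is one of `a`'s two listed houses. -/
def graph (M : TwoCol A B) : SimpleGraph (A ⊕ B) where
  Adj x y :=
    (∃ a b, x = Sum.inl a ∧ y = Sum.inr b ∧ (M.h1 a = b ∨ M.h2 a = b)) ∨
    (∃ a b, y = Sum.inl a ∧ x = Sum.inr b ∧ (M.h1 a = b ∨ M.h2 a = b))
  symm := by
    constructor
    rintro x y (⟨a, b, h1, h2, h3⟩ | ⟨a, b, h1, h2, h3⟩)
    · exact Or.inr ⟨a, b, h1, h2, h3⟩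
    · exact Or.inl ⟨a, b, h1, h2, h3⟩
  loopless := by constructor; rintro x (⟨a, b, rfl, h2, _⟩ | ⟨a, b, rfl, h2, _⟩) <;> simp at h2

end TwoCol

/-!
If `x` is avoided by a Pareto optimal matching, no applicant ranks `x` first: that applicant
alone could take `x`. Rooting the tree at `x`, let every applicant take its house that is not its
parent; then each house other than `x` has exactly one child, and this is a complete matching
avoiding `x`. Among complete matchings avoiding `x`, one maximising the number of applicants at
their top house is Pareto optimal, because a blocking coalition can only move applicants up to
their top houses, none of which is `x`. Counting the `2|A|` edges of the tree gives
`|B| = |A| + 1`, so such a matching covers every house but `x`, and no matching covers all of `B`.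
-/

open SimpleGraph in
lemma SimpleGraph.IsTree.exists_parent {V : Type*} {G : SimpleGraph V} (hG : G.IsTree) (r : V) :
    ∃ par : V → V, par r = r ∧ (∀ v, v ≠ r → G.Adj (par v) v) ∧
      ∀ v w, G.Adj v w → par v = w ∨ par w = v := by
  choose q hq using fun v => (hG.existsUnique_path r v).exists
  refine ⟨fun v => (q v).penultimate, ?_,
    fun v hv => Walk.adj_penultimate (Walk.not_nil_of_ne hv.symm), ?_⟩
  · simp [Walk.eq_nil_iff_nil.mpr (Walk.isPath_iff_nil.mp (hq r))]
  · intro v w hvw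
    by_cases hw : w ∈ (q v).support
    · exact .inl (hG.isAcyclic.eq_penultimate_of_adj_end (hq v) hvw hw).symm
    · have hv := hG.isAcyclic.mem_support_of_ne_mem_support_of_adj_of_isPath
        (hq w) (hq v) hvw.symm hw
      exact .inr (hG.isAcyclic.eq_penultimate_of_adj_end (hq w) hvw.symm hv).symm

lemma Fintype.card_le_of_forall_exists_eq_some {A B : Type*} [Fintype A] [Fintype B]
    {τ : A → Option B} (h : ∀ b, ∃ a, τ a = some b) :
    Fintype.card B ≤ Fintype.card A := by
  choose f hf using h
  refine Fintype.card_le_of_injective f fun b b' hbb' => Option.some_injective B ?_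
  rw [← hf b, ← hf b', hbb']

lemma Fintype.exists_apply_eq_of_injective_of_card_eq_add_one {A B : Type*} [Fintype A]
    [Fintype B] [DecidableEq B] {g : A → B} (hg : Function.Injective g)
    (hcard : Fintype.card B = Fintype.card A + 1) {x : B} (hx : ∀ a, g a ≠ x) {b : B}
    (hb : b ≠ x) : ∃ a, g a = b := by
  let g' : A → {b // b ≠ x} := fun a => ⟨g a, hx a⟩
  have hg' : Function.Bijective g' := by
    refine (Fintype.bijective_iff_injective_and_card g').mpr ⟨fun a a' h => hg ?_, ?_⟩
    · exact congrArg Subtype.val h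
    · simp [hcard]
  obtain ⟨a, ha⟩ := hg'.surjective ⟨b, hb⟩
  exact ⟨a, congrArg Subtype.val ha⟩

namespace TwoCol

variable {A B : Type*} (M : TwoCol A B)

lemma graph_adj_inl_inr {a : A} {b : B} :
    M.graph.Adj (.inl a) (.inr b) ↔ M.h1 a = b ∨ M.h2 a = b := by
  simp [graph]

lemma card_edgeSet_graph [Fintype A] [Fintype M.graph.edgeSet] :
    Fintype.card M.graph.edgeSet = 2 * Fintype.card A := by
  let e : A ⊕ A → M.graph.edgeSet := Sum.elim
    (fun a => ⟨s(.inl a, .inr (M.h1 a)), by simp [graph_adj_inl_inr]⟩)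
    (fun a => ⟨s(.inl a, .inr (M.h2 a)), by simp [graph_adj_inl_inr]⟩)
  have he : Function.Bijective e := by
    constructor
    · rintro (a | a) (a' | a') h <;>
        obtain ⟨rfl, h⟩ : a = a' ∧ _ := by simpa [e, Sym2.eq_iff] using congrArg Subtype.val h
      exacts [rfl, absurd h (M.distinct a), absurd h.symm (M.distinct a), rfl]
    · rintro ⟨e, he⟩
      induction e using Sym2.ind with
      | _ u v =>
        rw [SimpleGraph.mem_edgeSet] at he
        rcases he with ⟨a, b, rfl, rfl, rfl | rfl⟩ | ⟨a, b, rfl, rfl, rfl | rfl⟩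
        exacts [⟨.inl a, rfl⟩, ⟨.inr a, rfl⟩, ⟨.inl a, Subtype.ext Sym2.eq_swap⟩,
          ⟨.inr a, Subtype.ext Sym2.eq_swap⟩]
  rw [← Fintype.card_of_bijective he, Fintype.card_sum, two_mul]

lemma card_eq_card_add_one_of_isTree [Fintype A] [Fintype B] (htree : M.graph.IsTree) :
    Fintype.card B = Fintype.card A + 1 := by
  classical
  have h := htree.card_edgeFinset
  rw [SimpleGraph.edgeFinset_card, card_edgeSet_graph, Fintype.card_sum] at h
  omega

lemma isMatching_some_comp_iff {g : A → B} :
    M.IsMatching (some ∘ g) ↔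
      (∀ a, g a = M.h1 a ∨ g a = M.h2 a) ∧ Function.Injective g := by
  simp only [IsMatching, Function.comp_apply, Option.some.injEq]
  refine and_congr ⟨fun h a => h a _ rfl, fun h a b hb => hb ▸ h a⟩
    ⟨fun h a a' hg => h a a' _ rfl hg.symm, fun h a a' b ha ha' => h (ha.trans ha'.symm)⟩

lemma exists_isMatching_some_comp_of_isTree (htree : M.graph.IsTree) (x : B) :
    ∃ g : A → B, M.IsMatching (some ∘ g) ∧ ∀ a, g a ≠ x := by
  classical
  obtain ⟨par, hroot, -, hpar⟩ := htree.exists_parent (.inr x)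
  let g a := if par (.inl a) = .inr (M.h1 a) then M.h2 a else M.h1 a
  have hg a : (g a = M.h1 a ∨ g a = M.h2 a) ∧ par (.inr (g a)) = .inl a := by
    by_cases h : par (.inl a) = .inr (M.h1 a)
    · have hadj := (M.graph_adj_inl_inr (b := M.h2 a)).mpr (.inr rfl)
      simp only [g, if_pos h, or_true, true_and]
      exact (hpar _ _ hadj).resolve_left fun h' =>
        M.distinct a (Sum.inr_injective (h.symm.trans h'))
    · have hadj := (M.graph_adj_inl_inr (b := M.h1 a)).mpr (.inl rfl)
      simp only [g, if_neg h, true_or, true_and]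
      exact (hpar _ _ hadj).resolve_left h
  refine ⟨g, (M.isMatching_some_comp_iff).mpr ⟨fun a => (hg a).1, fun a a' h => ?_⟩, ?_⟩
  · simpa [h, (hg a').2] using (hg a).2.symm
  · intro a h
    simpa [h, hroot] using (hg a).2

variable {M}

lemma IsMatching.update [DecidableEq A] {τ : A → Option B} (hτ : M.IsMatching τ) {a : A}
    {b : B} (hb : b = M.h1 a ∨ b = M.h2 a) (hfree : ∀ a', τ a' ≠ some b) :
    M.IsMatching (Function.update τ a (some b)) := by
  refine ⟨fun a' b' h => ?_, fun a₁ a₂ b' h₁ h₂ => ?_⟩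
  · rw [Function.update_apply] at h
    split_ifs at h with ha'
    · exact ha' ▸ Option.some_injective B h ▸ hb
    · exact hτ.1 a' b' h
  · rw [Function.update_apply] at h₁ h₂
    split_ifs at h₁ h₂ with ha₁ ha₂ ha₂
    · exact ha₁.trans ha₂.symm
    · exact absurd (h₂.trans h₁.symm) (hfree a₂)
    · exact absurd (h₁.trans h₂.symm) (hfree a₁)
    · exact hτ.2 a₁ a₂ b' h₁ h₂

lemma IsPOM.h1_ne_of_forall_ne_some {τ : A → Option B} (hτ : M.IsPOM τ) {x : B}
    (hx : ∀ a, τ a ≠ some x) (a : A) : M.h1 a ≠ x := by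
  intro hax
  classical
  refine hτ.2 {a} ⟨Set.singleton_nonempty a, Function.update τ a (some x),
    hτ.1.update (.inl hax.symm) hx, fun a' ha' => Function.update_of_ne ha' _ _, ?_⟩
  rintro a' rfl
  simp [PrefOpt, hax, hx]

lemma IsBlocking.exists_improvement {g : A → B} {S : Set A} (hS : M.IsBlocking (some ∘ g) S) :
    ∃ g' : A → B, M.IsMatching (some ∘ g') ∧ (∀ a, g' a = g a ∨ g' a = M.h1 a) ∧
      {a | g a = M.h1 a} ⊂ {a | g' a = M.h1 a} := by
  classical
  obtain ⟨⟨a₀, ha₀⟩, τ', hτ', hout, himp⟩ := hS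
  -- every applicant already holds a house, so a member of `S` can only improve to its top house
  have htop : ∀ a ∈ S, τ' a = some (M.h1 a) ∧ g a ≠ M.h1 a := by
    intro a ha
    rcases himp a ha with ⟨h₁, h₂⟩ | ⟨-, h⟩
    · exact ⟨h₁, fun h => h₂ (congrArg some h)⟩
    · simp at h
  let g' a := if a ∈ S then M.h1 a else g a
  have hτ' : τ' = some ∘ g' := by
    funext a
    by_cases ha : a ∈ S
    · simp [g', ha, (htop a ha).1]
    · simp [g', ha, hout a ha]
  refine ⟨g', hτ' ▸ ‹M.IsMatching τ'›, fun a => ?_, ?_⟩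
  · by_cases ha : a ∈ S <;> simp [g', ha]
  · refine (Set.ssubset_iff_of_subset fun a ha => ?_).mpr
      ⟨a₀, by simp [g', ha₀], (htop a₀ ha₀).2⟩
    have haS : a ∉ S := fun h => (htop a h).2 ha
    simpa [g', haS] using ha

lemma isPOM_of_forall_ncard_le [Finite A] {x : B} (hx : ∀ a, M.h1 a ≠ x) {g : A → B}
    (hg : M.IsMatching (some ∘ g)) (hgx : ∀ a, g a ≠ x)
    (hmax : ∀ g' : A → B, M.IsMatching (some ∘ g') → (∀ a, g' a ≠ x) →
      {a | g' a = M.h1 a}.ncard ≤ {a | g a = M.h1 a}.ncard) :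
    M.IsPOM (some ∘ g) := by
  refine ⟨hg, fun S hS => ?_⟩
  obtain ⟨g', hg', hg'g, hlt⟩ := hS.exists_improvement
  have hg'x a : g' a ≠ x := (hg'g a).elim (· ▸ hgx a) (· ▸ hx a)
  exact (hmax g' hg' hg'x).not_gt (Set.ncard_lt_ncard hlt)

lemma exists_isPOM_some_comp [Finite A] [Finite B] {x : B} (hx : ∀ a, M.h1 a ≠ x)
    (h : ∃ g : A → B, M.IsMatching (some ∘ g) ∧ ∀ a, g a ≠ x) :
    ∃ g : A → B, M.IsPOM (some ∘ g) ∧ ∀ a, g a ≠ x := by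
  obtain ⟨g, ⟨hg, hgx⟩, hmax⟩ :=
    Set.exists_max_image {g : A → B | M.IsMatching (some ∘ g) ∧ ∀ a, g a ≠ x}
      (fun g => {a | g a = M.h1 a}.ncard) (Set.toFinite _) h
  exact ⟨g, isPOM_of_forall_ncard_le hx hg hgx fun g' hg' hg'x => hmax g' ⟨hg', hg'x⟩, hgx⟩

end TwoCol

theorem stmt17_general {A B : Type*} [Fintype A] [Fintype B] (M : TwoCol A B)
    (htree : M.graph.IsTree) :
    (∀ x : B, (∃ τ : A → Option B, M.IsPOM τ ∧ ∀ a, τ a ≠ some x) →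
      ∃ τ : A → Option B, M.IsPOM τ ∧ (∀ a, τ a ≠ some x) ∧
        ∀ b : B, b ≠ x → ∃ a, τ a = some b) ∧
    ∀ τ : A → Option B, M.IsMatching τ → ¬ ∀ b : B, ∃ a, τ a = some b := by
  classical
  have hcard := M.card_eq_card_add_one_of_isTree htree
  refine ⟨fun x ⟨τ, hτ, hτx⟩ => ?_, fun τ _ hall => ?_⟩
  · obtain ⟨g, hg, hgx⟩ := TwoCol.exists_isPOM_some_comp (hτ.h1_ne_of_forall_ne_some hτx)
      (M.exists_isMatching_some_comp_of_isTree htree x)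
    refine ⟨some ∘ g, hg, fun a => by simpa using hgx a, fun b hb => ?_⟩
    obtain ⟨a, rfl⟩ := Fintype.exists_apply_eq_of_injective_of_card_eq_add_one
      (M.isMatching_some_comp_iff.mp hg.1).2 hcard hgx hb
    exact ⟨a, rfl⟩
  · have := Fintype.card_le_of_forall_exists_eq_some hall
    omega

/-- in a 2-column instance whose bipartite row-element graph is
a tree (connected and acyclic), for every avoidable house `x` there is a POM
whose image is all listed houses except `x`, and no matching selects every
house. (We take `B` to consist exactly of the listed houses.) -/
theorem stmt17 {A B : Type*} [Fintype A] [Fintype B] (M : TwoCol A B)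
    (hlisted : ∀ b : B, ∃ a, M.h1 a = b ∨ M.h2 a = b)
    (htree : M.graph.IsTree) :
    (∀ x : B, (∃ τ : A → Option B, M.IsPOM τ ∧ ∀ a, τ a ≠ some x) →
      ∃ τ : A → Option B, M.IsPOM τ ∧ (∀ a, τ a ≠ some x) ∧
        ∀ b : B, b ≠ x → ∃ a, τ a = some b) ∧
    ∀ τ : A → Option B, M.IsMatching τ → ¬ ∀ b : B, ∃ a, τ a = some b :=
  stmt17_general M htree
end
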